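/- Let a, b ≥ 1 and let A, B be disjoint finite sets with |A| = a, |B| = b. A coloring c: A ⊔ B → {R, G, W, K} (red, green, white, black) is good if the number of red elements of A equals the number of green elements of B and the number of green elements of A equals the number of red elements of B. Then Σ_{good c} t^{g(c)+w(c)} = Σ_{i=0}^{a} Σ_{j=0}^{b} C(a,i)·C(b,j)·C(a-i+j,j)·C(b+i-j,i)·t^{i+j}, where g(c), w(c) denote the numbers of green and white elements under c. -/

import Mathlib

/-!
Sort the good colorings by the numbers `i`, `j` of green-or-white elements of `A` and `B` and
the numbers `r`, `s` of red and green elements of `A`; goodness then says that `B` has `r` green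
and `s` red elements. A coloring of an `n`-set with `k` green-or-white, `s` green and `r` red
elements amounts to a `k`-set, an `s`-subset of it and an `r`-subset of its complement, so there
are `C(n,k) C(k,s) C(n-k,r)` of them. Summing over `r` and `s`, Vandermonde's identity in the form
`∑ᵣ C(m,r) C(n,r) = C(m+n,m)` turns the coefficient of `t^(i+j)` into
`C(a,i) C(b,j) C(a-i+j,j) C(b+i-j,i)`.
-/

open Polynomial Finset

/-- Four colors: red, green, white, black. -/
inductive Col
  | R | G | W | K
deriving DecidableEq

instance : Fintype Col :=
  ⟨{Col.R, Col.G, Col.W, Col.K}, fun x => by cases x <;> simp⟩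

/-- A coloring of `A ⊕ B` is good if the number of red elements of `A` equals the number of
green elements of `B` and the number of green elements of `A` equals the number of red
elements of `B`. -/
def IsGood {A B : Type} [Fintype A] [Fintype B] (c : A ⊕ B → Col) : Prop :=
  (Finset.univ.filter (fun x : A => c (Sum.inl x) = Col.R)).card
      = (Finset.univ.filter (fun y : B => c (Sum.inr y) = Col.G)).card ∧
  (Finset.univ.filter (fun x : A => c (Sum.inl x) = Col.G)).card
      = (Finset.univ.filter (fun y : B => c (Sum.inr y) = Col.R)).card

instance {A B : Type} [Fintype A] [Fintype B] (c : A ⊕ B → Col) :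
    Decidable (IsGood c) := by unfold IsGood; infer_instance

theorem Nat.sum_range_choose_mul_choose {m N : ℕ} (n : ℕ) (h : m ≤ N) :
    ∑ k ∈ range (N + 1), m.choose k * n.choose k = (m + n).choose m := by
  have hvanish : ∀ k ∈ range (N + 1), k ∉ range (m + 1) → m.choose k * n.choose k = 0 :=
    fun k _ hk => by rw [Nat.choose_eq_zero_of_lt (by simpa using hk), zero_mul]
  rw [← sum_subset (range_subset_range.mpr (by omega)) hvanish, Nat.add_comm m n,
    Nat.add_choose_eq, Nat.sum_antidiagonal_eq_sum_range_succ (fun p q => n.choose p * m.choose q)]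
  refine sum_congr rfl fun k hk => ?_
  rw [Nat.choose_symm (by simpa [Nat.lt_succ_iff] using hk), Nat.mul_comm]

namespace Col

variable {α : Type*} [Fintype α]

def profile (f : α → Col) : ℕ × ℕ × ℕ :=
  (#{x | f x = .G ∨ f x = .W}, #{x | f x = .G}, #{x | f x = .R})

theorem profile_mem_range (f : α → Col) :
    profile f ∈ range (Fintype.card α + 1) ×ˢ range (Fintype.card α + 1) ×ˢ
      range (Fintype.card α + 1) := by
  simp only [profile, mem_product, mem_range, Nat.lt_succ_iff]
  exact ⟨card_le_univ _, card_le_univ _, card_le_univ _⟩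

variable [DecidableEq α]

theorem card_filter_green_or_white (f : α → Col) :
    #{x | f x = .G ∨ f x = .W} = #{x | f x = .G} + #{x | f x = .W} := by
  rw [filter_or, card_union_of_disjoint (disjoint_filter.mpr fun x _ hG hW => by simp [hG] at hW)]

def ofFinsets (S T U : Finset α) (x : α) : Col :=
  if x ∈ S then (if x ∈ T then .G else .W) else (if x ∈ U then .R else .K)

variable {S T U : Finset α}

theorem filter_ofFinsets_green_or_white :
    ({x | ofFinsets S T U x = .G ∨ ofFinsets S T U x = .W} : Finset α) = S := by
  ext x
  simp only [mem_filter, mem_univ, true_and]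
  unfold ofFinsets
  split_ifs <;> simp_all

theorem filter_ofFinsets_green (hT : T ⊆ S) :
    ({x | ofFinsets S T U x = .G} : Finset α) = T := by
  ext x
  simp only [mem_filter, mem_univ, true_and]
  unfold ofFinsets
  have := @hT x
  split_ifs <;> simp_all

theorem filter_ofFinsets_red (hU : U ⊆ Sᶜ) :
    ({x | ofFinsets S T U x = .R} : Finset α) = U := by
  ext x
  simp only [mem_filter, mem_univ, true_and]
  unfold ofFinsets
  have := @hU x
  split_ifs <;> simp_all

theorem ofFinsets_filter (f : α → Col) :
    ofFinsets {x | f x = .G ∨ f x = .W} {x | f x = .G} {x | f x = .R} = f := by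
  funext x; cases h : f x <;> simp [ofFinsets, h]

theorem card_profile_eq (i s r : ℕ) :
    #{f : α → Col | profile f = (i, s, r)}
      = (Fintype.card α).choose i * i.choose s * (Fintype.card α - i).choose r := by
  have hfiber : ∀ S ∈ powersetCard i (univ : Finset α),
      #(powersetCard s S ×ˢ powersetCard r Sᶜ)
        = i.choose s * (Fintype.card α - i).choose r := by
    intro S hS
    rw [mem_powersetCard] at hS
    rw [card_product, card_powersetCard, card_powersetCard, card_compl, hS.2]
  have hbase : (Fintype.card α).choose i = #(powersetCard i (univ : Finset α)) := by simp
  rw [mul_assoc, hbase, ← sum_const_nat hfiber, ← card_sigma]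
  refine card_nbij'
    (fun f => ⟨({x | f x = .G ∨ f x = .W} : Finset α),
      ({x | f x = .G} : Finset α), ({x | f x = .R} : Finset α)⟩)
    (fun p => ofFinsets p.1 p.2.1 p.2.2) ?_ ?_ ?_ ?_
  · intro f hf
    simp only [mem_coe, mem_filter, mem_univ, true_and] at hf
    simp only [profile, Prod.mk.injEq] at hf
    obtain ⟨hi, hs, hr⟩ := hf
    simp only [coe_sigma, Set.mem_sigma_iff, mem_coe, mem_product, mem_powersetCard]
    refine ⟨⟨subset_univ _, hi⟩, ⟨fun x => ?_, hs⟩, ⟨fun x => ?_, hr⟩⟩ <;> simp_all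
  · rintro ⟨S, T, U⟩ hp
    simp only [coe_sigma, Set.mem_sigma_iff, mem_coe, mem_product, mem_powersetCard] at hp
    obtain ⟨⟨-, hi⟩, ⟨hT, hs⟩, ⟨hU, hr⟩⟩ := hp
    simp only [mem_coe, mem_filter, mem_univ, true_and]
    simp only [profile, filter_ofFinsets_green_or_white, filter_ofFinsets_green hT,
      filter_ofFinsets_red hU, hi, hs, hr]
  · intro f _
    exact ofFinsets_filter f
  · rintro ⟨S, T, U⟩ hp
    simp only [coe_sigma, Set.mem_sigma_iff, mem_coe, mem_product, mem_powersetCard] at hp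
    simp only [filter_ofFinsets_green_or_white, filter_ofFinsets_green hp.2.1.1,
      filter_ofFinsets_red hp.2.2.1]

end Col

theorem card_filter_sum_arrow {α β γ : Type*} [Fintype α] [Fintype β] [Fintype γ]
    [DecidableEq α] [DecidableEq β] (p : (α → γ) → Prop) (q : (β → γ) → Prop)
    [DecidablePred p] [DecidablePred q] :
    #{c : α ⊕ β → γ | p (c ∘ Sum.inl) ∧ q (c ∘ Sum.inr)}
      = #{f | p f} * #{g | q g} := by
  rw [← card_product, ← filter_product]
  exact card_equiv (Equiv.sumArrowEquivProdArrow α β γ)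
    (by simp [Equiv.sumArrowEquivProdArrow])

theorem card_filter_sum {α β : Type*} [Fintype α] [Fintype β] (p : α ⊕ β → Prop)
    [DecidablePred p] : #{z | p z} = #{x | p (Sum.inl x)} + #{y | p (Sum.inr y)} := by
  rw [card_filter, card_filter, card_filter, ← univ_disjSum_univ, sum_disjSum]

theorem Nat.sum_range_sum_range_choose_mul {a b i j : ℕ} (hi : i ≤ a) (hj : j ≤ b) :
    ∑ r ∈ range (a + 1), ∑ s ∈ range (a + 1),
        a.choose i * i.choose s * (a - i).choose r * (b.choose j * j.choose r * (b - j).choose s)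
      = a.choose i * b.choose j * (a - i + j).choose j * (b + i - j).choose i := by
  calc _ = a.choose i * b.choose j * (∑ r ∈ range (a + 1), (a - i).choose r * j.choose r)
        * ∑ s ∈ range (a + 1), i.choose s * (b - j).choose s := by
        rw [mul_assoc, sum_mul_sum, mul_sum]
        refine sum_congr rfl fun r _ => ?_
        rw [mul_sum]
        exact sum_congr rfl fun s _ => by ring
    _ = _ := by
        rw [Nat.sum_range_choose_mul_choose _ (Nat.sub_le a i), Nat.choose_symm_add,
          Nat.sum_range_choose_mul_choose _ hi, show i + (b - j) = b + i - j by omega]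

section Good

variable (A B : Type) [Fintype A] [Fintype B]

theorem isGood_and_profiles_eq_iff (c : A ⊕ B → Col) (i j r s : ℕ) :
    (IsGood c ∧ ((Col.profile (c ∘ Sum.inl)).1, (Col.profile (c ∘ Sum.inr)).1,
        (Col.profile (c ∘ Sum.inl)).2.2, (Col.profile (c ∘ Sum.inl)).2.1) = (i, j, r, s))
      ↔ Col.profile (c ∘ Sum.inl) = (i, s, r) ∧ Col.profile (c ∘ Sum.inr) = (j, r, s) := by
  simp only [IsGood, Col.profile, Function.comp_apply, Prod.mk.injEq]
  omega

variable [DecidableEq A] [DecidableEq B]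

theorem card_green_add_card_white_eq_profile (c : A ⊕ B → Col) :
    #{z | c z = .G} + #{z | c z = .W}
      = (Col.profile (c ∘ Sum.inl)).1 + (Col.profile (c ∘ Sum.inr)).1 := by
  simp only [Col.profile, Col.card_filter_green_or_white, Function.comp_apply,
    card_filter_sum fun z => c z = .G, card_filter_sum fun z => c z = .W]
  ring

theorem sum_isGood_pow_eq {R : Type*} [CommSemiring R] (t : R) :
    ∑ c : A ⊕ B → Col with IsGood c, t ^ (#{z | c z = .G} + #{z | c z = .W})
      = ∑ i ∈ range (Fintype.card A + 1), ∑ j ∈ range (Fintype.card B + 1),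
        ∑ r ∈ range (Fintype.card A + 1), ∑ s ∈ range (Fintype.card A + 1),
          (#{c : A ⊕ B → Col | Col.profile (c ∘ Sum.inl) = (i, s, r) ∧
            Col.profile (c ∘ Sum.inr) = (j, r, s)} : R) * t ^ (i + j) := by
  set key : (A ⊕ B → Col) → ℕ × ℕ × ℕ × ℕ := fun c =>
    ((Col.profile (c ∘ Sum.inl)).1, (Col.profile (c ∘ Sum.inr)).1,
      (Col.profile (c ∘ Sum.inl)).2.2, (Col.profile (c ∘ Sum.inl)).2.1)
  have hmaps : ∀ c ∈ ({c | IsGood c} : Finset (A ⊕ B → Col)),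
      key c ∈ range (Fintype.card A + 1) ×ˢ range (Fintype.card B + 1) ×ˢ
        range (Fintype.card A + 1) ×ˢ range (Fintype.card A + 1) := by
    intro c _
    have hA := Col.profile_mem_range (c ∘ Sum.inl)
    have hB := Col.profile_mem_range (c ∘ Sum.inr)
    simp only [mem_product] at hA hB ⊢
    exact ⟨hA.1, hB.1, hA.2.2, hA.2.1⟩
  rw [← sum_fiberwise_of_maps_to hmaps]
  simp only [sum_product]
  refine sum_congr rfl fun i _ => sum_congr rfl fun j _ =>
    sum_congr rfl fun r _ => sum_congr rfl fun s _ => ?_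
  rw [filter_filter, filter_congr fun c _ => isGood_and_profiles_eq_iff A B c i j r s,
    ← nsmul_eq_mul, ← sum_const]
  refine sum_congr rfl fun c hc => ?_
  rw [mem_filter] at hc
  rw [card_green_add_card_white_eq_profile, hc.2.1, hc.2.2]

end Good

theorem stmt_9_general (a b : ℕ)
    (A B : Type) [Fintype A] [Fintype B] [DecidableEq A] [DecidableEq B]
    (hA : Fintype.card A = a) (hB : Fintype.card B = b) :
    ∑ c ∈ Finset.univ.filter (fun c : A ⊕ B → Col => IsGood c),
        (X : Polynomial ℤ) ^ ((Finset.univ.filter (fun z : A ⊕ B => c z = Col.G)).card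
          + (Finset.univ.filter (fun z : A ⊕ B => c z = Col.W)).card)
      = ∑ i ∈ Finset.range (a + 1), ∑ j ∈ Finset.range (b + 1),
          C ((a.choose i * b.choose j * (a - i + j).choose j * (b + i - j).choose i : ℕ) : ℤ)
            * X ^ (i + j) := by
  subst hA hB
  rw [sum_isGood_pow_eq]
  refine sum_congr rfl fun i hi => sum_congr rfl fun j hj => ?_
  have hcount : ∀ r s, #{c : A ⊕ B → Col | Col.profile (c ∘ Sum.inl) = (i, s, r) ∧
      Col.profile (c ∘ Sum.inr) = (j, r, s)} = (Fintype.card A).choose i * i.choose s *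
        (Fintype.card A - i).choose r * ((Fintype.card B).choose j * j.choose r *
          (Fintype.card B - j).choose s) := fun r s => by
    rw [card_filter_sum_arrow (fun f => Col.profile f = (i, s, r))
      (fun g => Col.profile g = (j, r, s)), Col.card_profile_eq, Col.card_profile_eq]
  simp only [hcount, ← sum_mul, ← Nat.cast_sum]
  rw [mem_range_succ_iff] at hi hj
  rw [Nat.sum_range_sum_range_choose_mul hi hj, map_natCast]

theorem stmt_9 (a b : ℕ) (ha : 1 ≤ a) (hb : 1 ≤ b)
    (A B : Type) [Fintype A] [Fintype B] [DecidableEq A] [DecidableEq B]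
    (hA : Fintype.card A = a) (hB : Fintype.card B = b) :
    ∑ c ∈ Finset.univ.filter (fun c : A ⊕ B → Col => IsGood c),
        (X : Polynomial ℤ) ^ ((Finset.univ.filter (fun z : A ⊕ B => c z = Col.G)).card
          + (Finset.univ.filter (fun z : A ⊕ B => c z = Col.W)).card)
      = ∑ i ∈ Finset.range (a + 1), ∑ j ∈ Finset.range (b + 1),
          C ((a.choose i * b.choose j * (a - i + j).choose j * (b + i - j).choose i : ℕ) : ℤ)
            * X ^ (i + j) :=
  stmt_9_general a b A B hA hB
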